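/- If x₁ < x₂ < x₃ all belong to ½Ω^L, then τ(x₁) < τ(x₃). Consequently, for each level y the equation τ(x) = y has at most two solutions with x ∈ ½Ω^L; that is, for every y ∈ ℝ the set {x ∈ ½Ω^L : τ(x) = y} has at most two elements. -/

import Mathlib

open MeasureTheory Set

/-- Distance from a real number to the nearest integer. -/
noncomputable def distNearestInt (t : ℝ) : ℝ := |t - round t|

/-- The Takagi function. -/
noncomputable def takagi (x : ℝ) : ℝ := ∑' n : ℕ, distNearestInt (2 ^ n * x) / 2 ^ n

/-- The `j`-th binary digit of `x ∈ [0,1)` (binary expansion terminating in `0^∞`). -/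
noncomputable def bdigit (x : ℝ) (j : ℕ) : ℤ := ⌊(2 : ℝ) ^ j * x⌋ - 2 * ⌊(2 : ℝ) ^ (j - 1) * x⌋

/-- The deficient digit function `D_j(x) = j - 2(b_1(x) + ⋯ + b_j(x))`. -/
noncomputable def defDigit (x : ℝ) (j : ℕ) : ℤ := (j : ℤ) - 2 * ∑ i ∈ Finset.Icc 1 j, bdigit x i

/-- The deficient digit set `Ω^L`. -/
noncomputable def OmegaL : Set ℝ := {x | x ∈ Set.Ico (0 : ℝ) 1 ∧ ∀ j : ℕ, 1 ≤ j → 0 ≤ defDigit x j}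

/-- The set `½Ω^L = {x ∈ [0,1) : D_j(x) > 0 for all j ≥ 1}`. -/
noncomputable def halfOmegaL : Set ℝ :=
  {x | x ∈ Set.Ico (0 : ℝ) 1 ∧ ∀ j : ℕ, 1 ≤ j → 0 < defDigit x j}

/-- The Takagi singular function. -/
noncomputable def takagiS (x : ℝ) : ℝ := sSup {y | ∃ t ∈ OmegaL, t ≤ x ∧ y = takagi t + t}

/-- `Ω^L_∞`: points of `Ω^L` with infinitely many balance points. -/
noncomputable def OmegaLinf : Set ℝ :=
  {x ∈ OmegaL | {j : ℕ | 1 ≤ j ∧ defDigit x j = 0}.Infinite}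

/-- `Ω^L_fin = Ω^L \ Ω^L_∞`. -/
noncomputable def OmegaLfin : Set ℝ := OmegaL \ OmegaLinf

/-- `(m, k)` encodes a member `k / 2^(2m)` of the breakpoint set `ℬ'`. -/
noncomputable def breakpoint (m k : ℕ) : Prop :=
  (m = 0 ∧ k = 0) ∨
    (1 ≤ m ∧ 0 < k ∧ k < 2 ^ (2 * m) ∧
      (∀ j : ℕ, 1 ≤ j → j ≤ 2 * m - 1 → 0 ≤ defDigit ((k : ℝ) / 2 ^ (2 * m)) j) ∧
      defDigit ((k : ℝ) / 2 ^ (2 * m)) (2 * m) = 0)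

/-- The fine partition set `Ω^L(B)` for `B = k / 2^(2m)`. -/
noncomputable def fineSet (m k : ℕ) : Set ℝ :=
  {x | ∃ x' ∈ halfOmegaL, x = (k : ℝ) / 2 ^ (2 * m) + x' / 2 ^ (2 * m)}

/-- The set `Γ_{2r}`. -/
noncomputable def Gamma (r : ℕ) : Set ℝ :=
  {x | x ∈ Set.Ico (0 : ℝ) 1 ∧ ∀ j : ℕ, 1 ≤ j →
    ((¬ (2 * r ∣ j) → 0 < defDigit x j) ∧ ((2 * r) ∣ j → defDigit x j = 0))}

/-- The level set `L(y)` of the Takagi function. -/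
noncomputable def levelSet (y : ℝ) : Set ℝ := {x ∈ Set.Icc (0 : ℝ) 1 | takagi x = y}

lemma dni_nonneg (t : ℝ) : 0 ≤ distNearestInt t := abs_nonneg _

lemma dni_le_half (t : ℝ) : distNearestInt t ≤ 1 / 2 := by
  simpa [distNearestInt] using abs_sub_round t

lemma dni_int_add (t : ℝ) (k : ℤ) : distNearestInt (t + k) = distNearestInt t := by
  simp [distNearestInt, round_add_intCast]

lemma dni_left {t : ℝ} (h0 : 0 ≤ t) (h1 : t ≤ 1/2) : distNearestInt t = t := by
  rcases eq_or_lt_of_le h1 with h | h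
  · subst h; norm_num [distNearestInt, round_eq]
  · have : round t = 0 := by
      rw [round_eq]; apply Int.floor_eq_zero_iff.2
      constructor
      · simpa using by linarith
      · simpa using by linarith
    simp [distNearestInt, this, abs_of_nonneg h0]

lemma dni_right {t : ℝ} (h0 : 1/2 ≤ t) (h1 : t ≤ 1) : distNearestInt t = 1 - t := by
  have : round t = 1 := by
    rw [round_eq]
    rw [Int.floor_eq_iff]
    push_cast; constructor <;> linarith
  rw [distNearestInt, this]
  push_cast
  rw [abs_sub_comm, abs_of_nonneg (by linarith)]

lemma takagi_summable (x : ℝ) : Summable (fun n : ℕ => distNearestInt (2 ^ n * x) / 2 ^ n) := by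
  apply Summable.of_nonneg_of_le (fun n => div_nonneg (dni_nonneg _) (by positivity))
    (fun n => ?_) summable_geometric_two
  rw [div_le_iff₀ (by positivity)]
  calc distNearestInt (2 ^ n * x) ≤ 1/2 := dni_le_half _
  _ ≤ (1/2)^n * 2^n := by rw [← mul_pow]; norm_num
  _ = (1/2:ℝ)^n * 2^n := rfl

lemma takagi_nonneg (x : ℝ) : 0 ≤ takagi x :=
  tsum_nonneg fun n => div_nonneg (dni_nonneg _) (by positivity)

lemma takagi_le_one (x : ℝ) : takagi x ≤ 1 := by
  have h := Summable.tsum_le_tsum (f := fun n : ℕ => distNearestInt (2 ^ n * x) / 2 ^ n)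
      (g := fun n : ℕ => (1/2:ℝ)^n * (1/2)) (fun n => ?_) (takagi_summable x)
      (by exact (summable_geometric_two).mul_right _)
  · calc takagi x ≤ ∑' n : ℕ, (1/2:ℝ)^n * (1/2) := h
      _ = 2 * (1/2) := by rw [tsum_mul_right, tsum_geometric_two]
      _ = 1 := by norm_num
  · rw [div_le_iff₀ (by positivity)]
    calc distNearestInt (2 ^ n * x) ≤ 1/2 := dni_le_half _
    _ ≤ (1/2)^n * (1/2) * 2^n := by rw [mul_comm ((1/2:ℝ)^n), mul_assoc, ← mul_pow]; norm_num

lemma takagi_zero : takagi 0 = 0 := by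
  have : ∀ n : ℕ, distNearestInt (2 ^ n * (0:ℝ)) / 2 ^ n = 0 := by
    intro n; simp [distNearestInt]
  simp only [takagi, this, tsum_zero]

lemma takagi_rec (x : ℝ) : takagi x = distNearestInt x + takagi (2 * x) / 2 := by
  rw [takagi, Summable.tsum_eq_zero_add (takagi_summable x)]
  congr 1
  · norm_num
  · have : ∀ n : ℕ, distNearestInt (2 ^ (n+1) * x) / 2 ^ (n+1)
        = (1/2) * (distNearestInt (2 ^ n * (2*x)) / 2 ^ n) := by
      intro n
      rw [show (2:ℝ) ^ (n+1) * x = 2^n * (2*x) by ring, pow_succ]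
      ring
    simp_rw [this]
    rw [tsum_mul_left, takagi]
    ring

lemma takagi_int_add (x : ℝ) (k : ℤ) : takagi (x + k) = takagi x := by
  unfold takagi
  apply tsum_congr
  intro n
  have : (2:ℝ) ^ n * (x + k) = 2 ^ n * x + ((2^n * k : ℤ) : ℝ) := by push_cast; ring
  rw [this, dni_int_add]

lemma floor_eq_zero {y : ℝ} (h0 : 0 ≤ y) (h1 : y < 1) : ⌊y⌋ = 0 :=
  Int.floor_eq_zero_iff.2 ⟨h0, h1⟩

lemma bdigit_one {y : ℝ} (h0 : 0 ≤ y) (h1 : y < 1) : bdigit y 1 = ⌊2 * y⌋ := by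
  simp [bdigit, floor_eq_zero h0 h1]

lemma defDigit_one (y : ℝ) : defDigit y 1 = 1 - 2 * bdigit y 1 := by
  simp [defDigit]

lemma defDigit_succ (y : ℝ) (k : ℕ) :
    defDigit y (k+1) = defDigit y k + 1 - 2 * bdigit y (k+1) := by
  rw [defDigit, defDigit, Finset.sum_Icc_succ_top (by omega)]
  push_cast
  ring

lemma floor_shift (y : ℝ) (c : ℤ) (m : ℕ) :
    ⌊(2:ℝ)^m * (2 * y - (c:ℝ))⌋ = ⌊(2:ℝ)^(m+1) * y⌋ - 2^m * c := by
  have : (2:ℝ)^m * (2 * y - (c:ℝ)) = 2^(m+1) * y - ((2^m * c : ℤ) : ℝ) := by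
    push_cast; ring
  rw [this, Int.floor_sub_intCast]

lemma bdigit_shift (y : ℝ) (k : ℕ) (hk : 1 ≤ k) :
    bdigit (Int.fract (2 * y)) k = bdigit y (k + 1) := by
  obtain ⟨j, rfl⟩ : ∃ j, k = j + 1 := ⟨k - 1, by omega⟩
  rw [bdigit, bdigit, Int.fract]
  rw [show j + 1 - 1 = j from rfl, show j + 1 + 1 - 1 = j + 1 from rfl]
  rw [floor_shift, floor_shift]
  ring

lemma defDigit_shift (y : ℝ) (k : ℕ) (hk : 1 ≤ k) :
    defDigit (Int.fract (2 * y)) k = defDigit y (k + 1) + 2 * bdigit y 1 - 1 := by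
  induction k with
  | zero => omega
  | succ n ih =>
    rcases Nat.eq_or_lt_of_le hk with h | h
    · have hn : n = 0 := by omega
      subst hn
      rw [defDigit_one, bdigit_shift y 1 le_rfl, defDigit_succ y 1, defDigit_one]
      ring
    · have hn : 1 ≤ n := by omega
      rw [defDigit_succ, ih hn, bdigit_shift y (n+1) (by omega), defDigit_succ y (n+1)]
      ring
-- constraint shift helpers
lemma shift0 {y : ℝ} (h0 : 0 ≤ y) (h2 : 2 * y < 1) (k : ℕ) (hk : 1 ≤ k) :
    defDigit (2 * y) k = defDigit y (k + 1) - 1 := by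
  have hf : Int.fract (2 * y) = 2 * y := Int.fract_eq_self.2 ⟨by linarith, h2⟩
  have hb : bdigit y 1 = 0 := by
    rw [bdigit_one h0 (by linarith), floor_eq_zero (by linarith) h2]
  rw [← hf, defDigit_shift y k hk, hb]; ring

lemma shift1 {y : ℝ} (h2 : 1 ≤ 2 * y) (h1 : y < 1) (k : ℕ) (hk : 1 ≤ k) :
    defDigit (2 * y - 1) k = defDigit y (k + 1) + 1 := by
  have hfl : ⌊2 * y⌋ = 1 := by
    rw [Int.floor_eq_iff]; push_cast; constructor <;> linarith
  have hf : Int.fract (2 * y) = 2 * y - 1 := by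
    rw [Int.fract, hfl]; norm_num
  have hb : bdigit y 1 = 1 := by
    rw [bdigit_one (by linarith) h1, hfl]
  rw [← hf, defDigit_shift y k hk, hb]; ring

lemma defDigit_one_val {y : ℝ} (h0 : 0 ≤ y) (h1 : y < 1) :
    defDigit y 1 = 1 - 2 * ⌊2 * y⌋ := by
  rw [defDigit_one, bdigit_one h0 h1]

lemma lemA' : ∀ m : ℕ, ∀ y : ℝ, 0 ≤ y → y < 1 → ∀ D : ℤ, 1 ≤ D →
    (∀ k : ℕ, 1 ≤ k → 1 ≤ D + defDigit y k) → takagi y ≤ D * (1 - y) + (1/2)^m := by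
  intro m
  induction m with
  | zero =>
    intro y h0 h1 D hD _
    have : (0:ℝ) ≤ D * (1 - y) := by
      apply mul_nonneg _ (by linarith)
      exact_mod_cast (by omega : (0:ℤ) ≤ D)
    have := takagi_le_one y
    simp only [pow_zero]
    linarith
  | succ m ih =>
    intro y h0 h1 D hD hcon
    have hDR : (1:ℝ) ≤ (D:ℝ) := by exact_mod_cast hD
    rcases lt_or_ge y (1/2) with hy | hy
    · -- digit 0
      have key := ih (2*y) (by linarith) (by linarith) (D+1) (by omega) ?_
      · have hrec : takagi y = y + takagi (2*y) / 2 := by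
          rw [takagi_rec y, dni_left h0 (by linarith)]
        push_cast at key
        rw [hrec]
        have : ((1:ℝ)/2)^(m+1) = (1/2)*(1/2)^m := by ring
        linarith
      · intro k hk
        rw [shift0 h0 (by linarith) k hk]
        have := hcon (k+1) (by omega)
        omega
    · -- digit 1
      have hD2 : 2 ≤ D := by
        have h1c := hcon 1 le_rfl
        rw [defDigit_one_val h0 h1] at h1c
        have hfl : ⌊2 * y⌋ = 1 := by
          rw [Int.floor_eq_iff]; push_cast; constructor <;> linarith
        omega
      have key := ih (2*y - 1) (by linarith) (by linarith) (D-1) (by omega) ?_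
      · have hrec : takagi y = (1 - y) + takagi (2*y - 1) / 2 := by
          have h2t := takagi_int_add (2*y - 1) 1
          push_cast at h2t
          rw [show 2*y - 1 + 1 = 2*y by ring] at h2t
          rw [takagi_rec y, dni_right hy h1.le, h2t]
        push_cast at key
        rw [hrec]
        have : ((1:ℝ)/2)^(m+1) = (1/2)*(1/2)^m := by ring
        have hD2R : (2:ℝ) ≤ (D:ℝ) := by exact_mod_cast hD2
        nlinarith
      · intro k hk
        rw [shift1 (by linarith) h1 k hk]
        have := hcon (k+1) (by omega)
        omega

lemma lemA {y : ℝ} (h0 : 0 ≤ y) (h1 : y < 1) {D : ℤ} (hD : 1 ≤ D)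
    (hcon : ∀ k : ℕ, 1 ≤ k → 1 ≤ D + defDigit y k) : takagi y ≤ D * (1 - y) := by
  by_contra h
  push_neg at h
  obtain ⟨m, hm⟩ := exists_pow_lt_of_lt_one (sub_pos.2 h) (by norm_num : (1:ℝ)/2 < 1)
  have := lemA' m y h0 h1 D hD hcon
  linarith

lemma lemB : ∀ m : ℕ, ∀ y : ℝ, 0 ≤ y → y < 1 → Int.fract (2^m * y) = 0 → ∀ D : ℤ, 1 ≤ D →
    (∀ k : ℕ, 1 ≤ k → 1 ≤ D + defDigit y k) → takagi y < D * (1 - y) := by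
  intro m
  induction m with
  | zero =>
    intro y h0 h1 hfr D hD _
    have hy : y = 0 := by
      rw [pow_zero, one_mul, Int.fract_eq_self.2 ⟨h0, h1⟩] at hfr
      exact hfr
    subst hy
    rw [takagi_zero]
    simp only [sub_zero, mul_one]
    exact_mod_cast (by omega : (0:ℤ) < D)
  | succ m ih =>
    intro y h0 h1 hfr D hD hcon
    have hDR : (1:ℝ) ≤ (D:ℝ) := by exact_mod_cast hD
    rcases lt_or_ge y (1/2) with hy | hy
    · have key := ih (2*y) (by linarith) (by linarith) ?_ (D+1) (by omega) ?_
      · have hrec : takagi y = y + takagi (2*y) / 2 := by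
          rw [takagi_rec y, dni_left h0 (by linarith)]
        push_cast at key
        rw [hrec]
        linarith
      · rw [show (2:ℝ)^m * (2*y) = 2^(m+1) * y by ring]
        exact hfr
      · intro k hk
        rw [shift0 h0 (by linarith) k hk]
        have := hcon (k+1) (by omega)
        omega
    · have hD2 : 2 ≤ D := by
        have h1c := hcon 1 le_rfl
        rw [defDigit_one_val h0 h1] at h1c
        have hfl : ⌊2 * y⌋ = 1 := by
          rw [Int.floor_eq_iff]; push_cast; constructor <;> linarith
        omega
      have key := ih (2*y - 1) (by linarith) (by linarith) ?_ (D-1) (by omega) ?_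
      · have hrec : takagi y = (1 - y) + takagi (2*y - 1) / 2 := by
          have h2t := takagi_int_add (2*y - 1) 1
          push_cast at h2t
          rw [show 2*y - 1 + 1 = 2*y by ring] at h2t
          rw [takagi_rec y, dni_right hy h1.le, h2t]
        push_cast at key
        rw [hrec]
        have hD2R : (2:ℝ) ≤ (D:ℝ) := by exact_mod_cast hD2
        nlinarith
      · have : (2:ℝ)^m * (2*y - 1) = 2^(m+1) * y - ((2^m : ℤ) : ℝ) := by push_cast; ring
        rw [this, Int.fract_sub_intCast]
        exact hfr
      · intro k hk
        rw [shift1 (by linarith) h1 k hk]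
        have := hcon (k+1) (by omega)
        omega
lemma fract_double {t : ℝ} (h : Int.fract t = 0) : Int.fract (2 * t) = 0 := by
  have ht : t = (⌊t⌋ : ℝ) := by
    have := Int.fract_add_floor t
    rw [h, zero_add] at this
    exact this.symm
  rw [ht, show (2:ℝ) * (⌊t⌋:ℝ) = ((2 * ⌊t⌋ : ℤ) : ℝ) by push_cast; ring, Int.fract_intCast]

lemma lemC : ∀ n : ℕ, ∀ x₁ x₃ : ℝ, 0 ≤ x₁ → x₁ < x₃ → x₃ < 1 →
    ⌊(2:ℝ)^n * x₁⌋ < ⌊(2:ℝ)^n * x₃⌋ → ∀ d : ℤ, 0 ≤ d →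
    (∀ k : ℕ, 1 ≤ k → 1 ≤ d + defDigit x₁ k) → (∀ k : ℕ, 1 ≤ k → 1 ≤ d + defDigit x₃ k) →
    (d:ℝ) * x₁ + takagi x₁ ≤ (d:ℝ) * x₃ + takagi x₃ ∧
    ((d:ℝ) * x₁ + takagi x₁ = (d:ℝ) * x₃ + takagi x₃ →
      (∃ m : ℕ, Int.fract ((2:ℝ)^m * x₃) = 0) ∧ ∀ m : ℕ, Int.fract ((2:ℝ)^m * x₁) ≠ 0) := by
  intro n
  induction n with
  | zero =>
    intro x₁ x₃ h10 h13 h31 hfl d _ _ _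
    exfalso
    rw [pow_zero, one_mul, one_mul, floor_eq_zero h10 (by linarith),
      floor_eq_zero (by linarith) h31] at hfl
    omega
  | succ n ih =>
    intro x₁ x₃ h10 h13 h31 hfl d hd hc1 hc3
    have h30 : (0:ℝ) ≤ x₃ := by linarith
    have h11 : x₁ < 1 := by linarith
    have hdR : (0:ℝ) ≤ (d:ℝ) := by exact_mod_cast hd
    have hb1le : (0:ℤ) ≤ ⌊2 * x₁⌋ := Int.floor_nonneg.2 (by linarith)
    have hb3lt : ⌊2 * x₃⌋ < 2 := Int.floor_lt.2 (by push_cast; linarith)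
    have hb13 : ⌊2 * x₁⌋ ≤ ⌊2 * x₃⌋ := Int.floor_le_floor (by linarith)
    rcases eq_or_lt_of_le hb13 with hbe | hblt
    · -- same first digit b
      set b : ℤ := ⌊2 * x₁⌋ with hbdef
      have hb3 : ⌊2 * x₃⌋ = b := hbe.symm
      have hx1b : (b:ℝ) ≤ 2 * x₁ := Int.floor_le _
      have hx3b : 2 * x₃ < (b:ℝ) + 1 := by
        have := Int.lt_floor_add_one (2 * x₃)
        rw [hb3] at this; exact this
      have hfr1 : Int.fract (2 * x₁) = 2 * x₁ - (b:ℝ) := by rw [Int.fract, ← hbdef]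
      have hfr3 : Int.fract (2 * x₃) = 2 * x₃ - (b:ℝ) := by rw [Int.fract, hb3]
      have h10' : (0:ℝ) ≤ 2 * x₁ - (b:ℝ) := by linarith
      have h13' : 2 * x₁ - (b:ℝ) < 2 * x₃ - (b:ℝ) := by linarith
      have h31' : 2 * x₃ - (b:ℝ) < 1 := by linarith
      have hbd1 : bdigit x₁ 1 = b := by rw [bdigit_one h10 h11]
      have hbd3 : bdigit x₃ 1 = b := by rw [bdigit_one h30 h31, hb3]
      have hd1v : defDigit x₁ 1 = 1 - 2 * b := by rw [defDigit_one, hbd1]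
      have hb01 : b = 0 ∨ b = 1 := by omega
      have hd' : 0 ≤ d + 1 - 2 * b := by
        rcases hb01 with h | h
        · omega
        · have := hc1 1 le_rfl; rw [hd1v] at this; omega
      have hflo : ⌊(2:ℝ)^n * (2 * x₁ - (b:ℝ))⌋ < ⌊(2:ℝ)^n * (2 * x₃ - (b:ℝ))⌋ := by
        rw [floor_shift, floor_shift]
        exact sub_lt_sub_right hfl _
      have hc1' : ∀ k : ℕ, 1 ≤ k → 1 ≤ (d + 1 - 2*b) + defDigit (2 * x₁ - (b:ℝ)) k := by
        intro k hk
        rw [← hfr1, defDigit_shift x₁ k hk, hbd1]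
        have := hc1 (k+1) (by omega)
        omega
      have hc3' : ∀ k : ℕ, 1 ≤ k → 1 ≤ (d + 1 - 2*b) + defDigit (2 * x₃ - (b:ℝ)) k := by
        intro k hk
        rw [← hfr3, defDigit_shift x₃ k hk, hbd3]
        have := hc3 (k+1) (by omega)
        omega
      obtain ⟨IH1, IH2⟩ := ih (2 * x₁ - (b:ℝ)) (2 * x₃ - (b:ℝ)) h10' h13' h31' hflo
        (d + 1 - 2*b) hd' hc1' hc3'
      push_cast at IH1 IH2
      have hrec1 : takagi x₁ = distNearestInt x₁ + takagi (2 * x₁ - (b:ℝ)) / 2 := by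
        have h2t := takagi_int_add (2 * x₁ - (b:ℝ)) b
        rw [show 2 * x₁ - (b:ℝ) + (b:ℝ) = 2 * x₁ by ring] at h2t
        rw [takagi_rec x₁, h2t]
      have hrec3 : takagi x₃ = distNearestInt x₃ + takagi (2 * x₃ - (b:ℝ)) / 2 := by
        have h2t := takagi_int_add (2 * x₃ - (b:ℝ)) b
        rw [show 2 * x₃ - (b:ℝ) + (b:ℝ) = 2 * x₃ by ring] at h2t
        rw [takagi_rec x₃, h2t]
      have hdni1 : distNearestInt x₁ = x₁ - (b:ℝ) * (2 * x₁ - 1) := by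
        rcases hb01 with h | h
        · rw [h] at hx3b ⊢; push_cast at hx3b ⊢
          rw [dni_left h10 (by linarith)]; ring
        · rw [h] at hx1b ⊢; push_cast at hx1b ⊢
          rw [dni_right (by linarith) h11.le]; ring
      have hdni3 : distNearestInt x₃ = x₃ - (b:ℝ) * (2 * x₃ - 1) := by
        rcases hb01 with h | h
        · rw [h] at hx3b ⊢; push_cast at hx3b ⊢
          rw [dni_left h30 (by linarith)]; ring
        · rw [h] at hx1b ⊢; push_cast at hx1b ⊢
          rw [dni_right (by linarith) h31.le]; ring
      constructor
      · linarith [IH1, hrec1, hrec3, hdni1, hdni3]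
      · intro hEq
        have hEq' : ((d:ℝ) + 1 - 2*(b:ℝ)) * (2 * x₁ - (b:ℝ)) + takagi (2 * x₁ - (b:ℝ))
            = ((d:ℝ) + 1 - 2*(b:ℝ)) * (2 * x₃ - (b:ℝ)) + takagi (2 * x₃ - (b:ℝ)) := by
          linarith [IH1, hEq, hrec1, hrec3, hdni1, hdni3]
        obtain ⟨⟨m, hm⟩, hnd⟩ := IH2 hEq'
        constructor
        · refine ⟨m + 1, ?_⟩
          rw [show (2:ℝ)^(m+1) * x₃ = 2^m * (2 * x₃ - (b:ℝ)) + ((2^m * b : ℤ):ℝ) by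
            push_cast; ring, Int.fract_add_intCast]
          exact hm
        · intro M hM
          match M with
          | 0 =>
            rw [pow_zero, one_mul, Int.fract_eq_self.2 ⟨h10, h11⟩] at hM
            apply hnd 0
            rw [pow_zero, one_mul, hM]
            have hb0 : b = 0 := by
              rw [hbdef, hM]; norm_num
            rw [hb0]
            norm_num
          | (M' + 1) =>
            apply hnd M'
            rw [show (2:ℝ)^M' * (2 * x₁ - (b:ℝ)) = 2^(M'+1) * x₁ - ((2^M' * b : ℤ):ℝ) by
              push_cast; ring, Int.fract_sub_intCast]
            exact hM
    · -- differing first digit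
      have hb1 : ⌊2 * x₁⌋ = 0 := by omega
      have hb3 : ⌊2 * x₃⌋ = 1 := by omega
      have hx1h : 2 * x₁ < 1 := by
        have := Int.lt_floor_add_one (2 * x₁); rw [hb1] at this; push_cast at this; linarith
      have hx3h : (1:ℝ) ≤ 2 * x₃ := by
        have := Int.floor_le (2 * x₃); rw [hb3] at this; push_cast at this; linarith
      have hd2 : 2 ≤ d := by
        have := hc3 1 le_rfl
        rw [defDigit_one_val h30 h31, hb3] at this
        omega
      have hd2R : (2:ℝ) ≤ (d:ℝ) := by exact_mod_cast hd2
      have hcy1 : ∀ k : ℕ, 1 ≤ k → 1 ≤ (d + 1) + defDigit (2 * x₁) k := by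
        intro k hk
        rw [shift0 h10 hx1h k hk]
        have := hc1 (k+1) (by omega)
        omega
      have hA := lemA (by linarith : (0:ℝ) ≤ 2 * x₁) (by linarith : 2 * x₁ < 1)
        (by omega : (1:ℤ) ≤ d + 1) hcy1
      push_cast at hA
      have hrec1 : takagi x₁ = x₁ + takagi (2 * x₁) / 2 := by
        rw [takagi_rec x₁, dni_left h10 (by linarith)]
      have hrec3 : takagi x₃ = (1 - x₃) + takagi (2 * x₃ - 1) / 2 := by
        have h2t := takagi_int_add (2 * x₃ - 1) 1
        push_cast at h2t
        rw [show 2 * x₃ - 1 + 1 = 2 * x₃ by ring] at h2t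
        rw [takagi_rec x₃, dni_right (by linarith) h31.le, h2t]
      have hy3nn : (0:ℝ) ≤ 2 * x₃ - 1 := by linarith
      have htnn := takagi_nonneg (2 * x₃ - 1)
      have hB1 : (0:ℝ) ≤ ((d:ℝ) - 1) * (2 * x₃ - 1) := by
        apply mul_nonneg (by linarith) hy3nn
      constructor
      · linarith [hA, hB1, htnn, hrec1, hrec3]
      · intro hEq
        have hA0 : takagi (2 * x₁) = ((d:ℝ) + 1) * (1 - 2 * x₁) := by
          linarith [hA, hB1, htnn, hEq, hrec1, hrec3]
        have hB0 : ((d:ℝ) - 1) * (2 * x₃ - 1) = 0 := by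
          linarith [hA, hB1, htnn, hEq, hrec1, hrec3]
        have hx3v : x₃ = 1/2 := by
          rcases mul_eq_zero.1 hB0 with h | h
          · exfalso; linarith
          · linarith
        constructor
        · refine ⟨1, ?_⟩
          rw [hx3v]
          norm_num
        · intro M hM
          have hfr : Int.fract ((2:ℝ)^M * (2 * x₁)) = 0 := by
            rw [show (2:ℝ)^M * (2 * x₁) = 2 * (2^M * x₁) by ring]
            exact fract_double hM
          have hB := lemB M (2 * x₁) (by linarith) (by linarith) hfr (d + 1)
            (by omega) hcy1
          push_cast at hB
          linarith [hA0, hB]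
lemma exists_floor_lt {x₁ x₃ : ℝ} (h : x₁ < x₃) :
    ∃ n : ℕ, ⌊(2:ℝ)^n * x₁⌋ < ⌊(2:ℝ)^n * x₃⌋ := by
  obtain ⟨n, hn⟩ := pow_unbounded_of_one_lt ((x₃ - x₁)⁻¹) (by norm_num : (1:ℝ) < 2)
  refine ⟨n, ?_⟩
  have hpos : (0:ℝ) < x₃ - x₁ := by linarith
  have h1 : (1:ℝ) < 2^n * (x₃ - x₁) := by
    rw [← inv_mul_cancel₀ (ne_of_gt hpos)]
    exact mul_lt_mul_of_pos_right hn hpos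
  have : 2^n * x₁ + 1 ≤ 2^n * x₃ := by nlinarith
  calc ⌊(2:ℝ)^n * x₁⌋ < ⌊(2:ℝ)^n * x₁⌋ + 1 := by omega
    _ = ⌊(2:ℝ)^n * x₁ + 1⌋ := by rw [Int.floor_add_one]
    _ ≤ ⌊(2:ℝ)^n * x₃⌋ := Int.floor_le_floor this

lemma pair_lemma {x₁ x₃ : ℝ} (h1 : x₁ ∈ halfOmegaL) (h3 : x₃ ∈ halfOmegaL) (h13 : x₁ < x₃) :
    takagi x₁ ≤ takagi x₃ ∧
    (takagi x₁ = takagi x₃ →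
      (∃ m : ℕ, Int.fract ((2:ℝ)^m * x₃) = 0) ∧ ∀ m : ℕ, Int.fract ((2:ℝ)^m * x₁) ≠ 0) := by
  obtain ⟨⟨h10, h11⟩, hD1⟩ := h1
  obtain ⟨⟨h30, h31⟩, hD3⟩ := h3
  obtain ⟨n, hn⟩ := exists_floor_lt h13
  have hc1 : ∀ k : ℕ, 1 ≤ k → 1 ≤ (0:ℤ) + defDigit x₁ k := fun k hk => by
    have := hD1 k hk; omega
  have hc3 : ∀ k : ℕ, 1 ≤ k → 1 ≤ (0:ℤ) + defDigit x₃ k := fun k hk => by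
    have := hD3 k hk; omega
  obtain ⟨H1, H2⟩ := lemC n x₁ x₃ h10 h13 h31 hn 0 le_rfl hc1 hc3
  push_cast at H1 H2
  simp only [zero_mul, zero_add] at H1 H2
  exact ⟨H1, H2⟩


/-- Strict increase on `½Ω^L` away from pairs, and each level meets `½Ω^L`
in at most two points. -/
theorem takagi_halfOmegaL_strict_and_at_most_two :
    (∀ x₁ ∈ halfOmegaL, ∀ x₂ ∈ halfOmegaL, ∀ x₃ ∈ halfOmegaL,
      x₁ < x₂ → x₂ < x₃ → takagi x₁ < takagi x₃) ∧
    (∀ y : ℝ, {x ∈ halfOmegaL | takagi x = y}.encard ≤ 2) := by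

  have key : ∀ x₁ ∈ halfOmegaL, ∀ x₂ ∈ halfOmegaL, ∀ x₃ ∈ halfOmegaL,
      x₁ < x₂ → x₂ < x₃ → takagi x₁ < takagi x₃ := by
    intro x₁ h1 x₂ h2 x₃ h3 h12 h23
    obtain ⟨le12, eq12⟩ := pair_lemma h1 h2 h12
    obtain ⟨le23, eq23⟩ := pair_lemma h2 h3 h23
    rcases lt_or_ge (takagi x₁) (takagi x₃) with h | h
    · exact h
    have heq12 : takagi x₁ = takagi x₂ := le_antisymm le12 (by linarith)
    have heq23 : takagi x₂ = takagi x₃ := le_antisymm le23 (by linarith)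
    obtain ⟨⟨m, hm⟩, _⟩ := eq12 heq12
    obtain ⟨_, hnd⟩ := eq23 heq23
    exact absurd hm (hnd m)
  refine ⟨key, fun y => ?_⟩
  by_contra hlt
  rw [not_le] at hlt
  have h3le : (3:ℕ∞) ≤ {x ∈ halfOmegaL | takagi x = y}.encard := by
    exact Order.add_one_le_of_lt hlt
  obtain ⟨t, hts, ht3⟩ := Set.exists_subset_encard_eq h3le
  obtain ⟨a, b, c, hab, hac, hbc, rfl⟩ := Set.encard_eq_three.1 ht3
  have ha := hts (by simp : a ∈ ({a,b,c} : Set ℝ))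
  have hb := hts (by simp : b ∈ ({a,b,c} : Set ℝ))
  have hc := hts (by simp : c ∈ ({a,b,c} : Set ℝ))
  have ordered : ∀ p q r : ℝ, p ∈ {x ∈ halfOmegaL | takagi x = y} →
      q ∈ {x ∈ halfOmegaL | takagi x = y} → r ∈ {x ∈ halfOmegaL | takagi x = y} →
      p < q → q < r → False := by
    intro p q r hp hq hr hpq hqr
    have := key p hp.1 q hq.1 r hr.1 hpq hqr
    rw [hp.2, hr.2] at this
    exact lt_irrefl y this
  rcases lt_trichotomy a b with h1 | h1 | h1
  · rcases lt_trichotomy b c with h2 | h2 | h2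
    · exact ordered a b c ha hb hc h1 h2
    · exact hbc h2
    · rcases lt_trichotomy a c with h3 | h3 | h3
      · exact ordered a c b ha hc hb h3 h2
      · exact hac h3
      · exact ordered c a b hc ha hb h3 h1
  · exact hab h1
  · rcases lt_trichotomy a c with h2 | h2 | h2
    · exact ordered b a c hb ha hc h1 h2
    · exact hac h2
    · rcases lt_trichotomy b c with h3 | h3 | h3
      · exact ordered b c a hb hc ha h3 h2
      · exact hbc h3
      · exact ordered c b a hc hb ha h3 h1
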